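/- arXiv:2603.01917 — 3 statements merged into one kernel-verified Lean document; each statement's English description precedes it below -/
import Mathlib

section
/- For all vectors u, v in ℝ^d and r ≥ 1, the monotonicity inequality ⟨|u|^{r-1}u - |v|^{r-1}v, u - v⟩ ≥ (1/2)|u|^{r-1}|u-v|² + (1/2)|v|^{r-1}|u-v|² holds, where ⟨·,·⟩ is the Euclidean inner product. -/
/-!
Writing `a = ‖u‖ ^ (r - 1)` and `b = ‖v‖ ^ (r - 1)`, the polarization-type identity
`⟪a • u - b • v, u - v⟫ = (a + b) / 2 * ‖u - v‖² + (a - b) / 2 * (‖u‖² - ‖v‖²)`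
reduces the inequality to `0 ≤ (a - b) * (‖u‖² - ‖v‖²)`, which holds because both
`t ↦ t ^ (r - 1)` and `t ↦ t²` are nondecreasing on `[0, ∞)`.
-/

open Real Set

section InnerProductSpace

variable {E : Type*} [NormedAddCommGroup E] [InnerProductSpace ℝ E]

lemma inner_smul_sub_smul_sub_eq (a b : ℝ) (u v : E) :
    inner ℝ (a • u - b • v) (u - v) =
      (a + b) / 2 * ‖u - v‖ ^ 2 + (a - b) / 2 * (‖u‖ ^ 2 - ‖v‖ ^ 2) := by
  rw [norm_sub_sq_real]
  simp only [inner_sub_left, inner_sub_right, real_inner_smul_left,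
    real_inner_self_eq_norm_sq, real_inner_comm v u]
  ring

lemma sub_mul_sq_sub_sq_nonneg {φ : ℝ → ℝ} (hφ : MonotoneOn φ (Ici 0)) {s t : ℝ}
    (hs : 0 ≤ s) (ht : 0 ≤ t) : 0 ≤ (φ s - φ t) * (s ^ 2 - t ^ 2) := by
  rcases le_total s t with hst | hts
  · exact mul_nonneg_of_nonpos_of_nonpos (sub_nonpos.2 (hφ hs ht hst))
      (sub_nonpos.2 (pow_le_pow_left₀ hs hst 2))
  · exact mul_nonneg (sub_nonneg.2 (hφ ht hs hts)) (sub_nonneg.2 (pow_le_pow_left₀ ht hts 2))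

theorem mul_norm_sub_sq_le_inner_smul_norm_sub {φ : ℝ → ℝ} (hφ : MonotoneOn φ (Ici 0))
    (u v : E) :
    (φ ‖u‖ + φ ‖v‖) / 2 * ‖u - v‖ ^ 2 ≤ inner ℝ (φ ‖u‖ • u - φ ‖v‖ • v) (u - v) := by
  have hmono := sub_mul_sq_sub_sq_nonneg hφ (norm_nonneg u) (norm_nonneg v)
  rw [inner_smul_sub_smul_sub_eq]
  linarith

end InnerProductSpace

theorem stmt_0 (d : ℕ) (u v : EuclideanSpace ℝ (Fin d)) (r : ℝ) (hr : 1 ≤ r) :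
    (inner ℝ (‖u‖ ^ (r - 1) • u - ‖v‖ ^ (r - 1) • v) (u - v) : ℝ) ≥
      (1 / 2) * ‖u‖ ^ (r - 1) * ‖u - v‖ ^ 2 + (1 / 2) * ‖v‖ ^ (r - 1) * ‖u - v‖ ^ 2 := by
  have h := mul_norm_sub_sq_le_inner_smul_norm_sub
    (monotoneOn_rpow_Ici_of_exponent_nonneg (sub_nonneg.2 hr)) u v
  linarith
end

section
/- For all vectors u, v, w in ℝ^d and r ≥ 1, |⟨|u|^{r-1}u - |v|^{r-1}v, w⟩| ≤ r (|u| + |v|)^{r-1} |u - v| |w|. -/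
/-!
Put `s = r - 1` and assume `‖v‖ ≤ ‖u‖`. Splitting
`‖u‖^s u - ‖v‖^s v = ‖u‖^s (u - v) + (‖u‖^s - ‖v‖^s) v`, the first term has norm `‖u‖^s ‖u - v‖`.
For the second, the mean value theorem gives `a^s - b^s = s c^(s-1) (a - b)` for some `b < c < a`,
and `b c^(s-1) ≤ c^s ≤ a^s`, so `(a^s - b^s) b ≤ s a^s (a - b)`; with `a - b ≤ ‖u - v‖` the two
terms add up to `r ‖u‖^s ‖u - v‖`. Cauchy–Schwarz then handles the pairing with `w`.
-/

open Real

lemma Real.rpow_sub_rpow_mul_le {a b s : ℝ} (hs : 0 ≤ s) (hb : 0 ≤ b) (hba : b ≤ a) :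
    (a ^ s - b ^ s) * b ≤ s * a ^ s * (a - b) := by
  rcases hb.eq_or_lt with rfl | hb
  · simp only [mul_zero]; positivity
  rcases hba.eq_or_lt with rfl | hba
  · simp
  obtain ⟨c, ⟨hbc, hca⟩, hc⟩ := exists_hasDerivAt_eq_slope (fun x => x ^ s)
    (fun x => s * x ^ (s - 1)) hba
    (continuousOn_id.rpow_const fun _ _ => Or.inr hs)
    (fun x hx => hasDerivAt_rpow_const (Or.inl (hb.trans hx.1).ne'))
  have hc0 : 0 < c := hb.trans hbc
  have hslope : a ^ s - b ^ s = s * c ^ (s - 1) * (a - b) := by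
    rw [hc]; field_simp [(sub_pos.2 hba).ne']
  have hbound : c ^ (s - 1) * b ≤ a ^ s :=
    calc c ^ (s - 1) * b ≤ c ^ (s - 1) * c := by gcongr
      _ = c ^ s := by rw [← rpow_add_one hc0.ne', sub_add_cancel]
      _ ≤ a ^ s := by gcongr
  calc (a ^ s - b ^ s) * b = s * (c ^ (s - 1) * b) * (a - b) := by rw [hslope]; ring
    _ ≤ s * a ^ s * (a - b) := by gcongr

section NormedSpace

variable {E : Type*} [NormedAddCommGroup E] [NormedSpace ℝ E]

lemma norm_rpow_smul_sub_rpow_smul_le_of_norm_le {u v : E} {r : ℝ} (hr : 1 ≤ r)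
    (h : ‖v‖ ≤ ‖u‖) :
    ‖‖u‖ ^ (r - 1) • u - ‖v‖ ^ (r - 1) • v‖ ≤ r * ‖u‖ ^ (r - 1) * ‖u - v‖ := by
  have hs : 0 ≤ r - 1 := by linarith
  have hmono : ‖v‖ ^ (r - 1) ≤ ‖u‖ ^ (r - 1) := by gcongr
  have hsplit : ‖u‖ ^ (r - 1) • u - ‖v‖ ^ (r - 1) • v
      = ‖u‖ ^ (r - 1) • (u - v) + (‖u‖ ^ (r - 1) - ‖v‖ ^ (r - 1)) • v := by
    rw [smul_sub, sub_smul]; abel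
  calc ‖‖u‖ ^ (r - 1) • u - ‖v‖ ^ (r - 1) • v‖
      ≤ ‖u‖ ^ (r - 1) * ‖u - v‖ + (‖u‖ ^ (r - 1) - ‖v‖ ^ (r - 1)) * ‖v‖ := by
        rw [hsplit]
        refine (norm_add_le _ _).trans_eq ?_
        rw [norm_smul, norm_smul, norm_of_nonneg (by positivity),
          norm_of_nonneg (sub_nonneg.2 hmono)]
    _ ≤ ‖u‖ ^ (r - 1) * ‖u - v‖ + (r - 1) * ‖u‖ ^ (r - 1) * (‖u‖ - ‖v‖) := by
        linarith [rpow_sub_rpow_mul_le hs (norm_nonneg v) h]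
    _ ≤ ‖u‖ ^ (r - 1) * ‖u - v‖ + (r - 1) * ‖u‖ ^ (r - 1) * ‖u - v‖ := by
        gcongr; exact norm_sub_norm_le u v
    _ = r * ‖u‖ ^ (r - 1) * ‖u - v‖ := by ring

lemma norm_rpow_smul_sub_rpow_smul_le (u v : E) {r : ℝ} (hr : 1 ≤ r) :
    ‖‖u‖ ^ (r - 1) • u - ‖v‖ ^ (r - 1) • v‖ ≤ r * max ‖u‖ ‖v‖ ^ (r - 1) * ‖u - v‖ := by
  rcases le_total ‖v‖ ‖u‖ with h | h
  · rw [max_eq_left h]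
    exact norm_rpow_smul_sub_rpow_smul_le_of_norm_le hr h
  · rw [max_eq_right h, norm_sub_rev, norm_sub_rev u]
    exact norm_rpow_smul_sub_rpow_smul_le_of_norm_le hr h

end NormedSpace

theorem stmt_2 (d : ℕ) (u v w : EuclideanSpace ℝ (Fin d)) (r : ℝ) (hr : 1 ≤ r) :
    |(inner ℝ (‖u‖ ^ (r - 1) • u - ‖v‖ ^ (r - 1) • v) w : ℝ)| ≤
      r * (‖u‖ + ‖v‖) ^ (r - 1) * ‖u - v‖ * ‖w‖ := by
  have hmax : max ‖u‖ ‖v‖ ^ (r - 1) ≤ (‖u‖ + ‖v‖) ^ (r - 1) := by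
    have := max_le_add_of_nonneg (norm_nonneg u) (norm_nonneg v)
    gcongr
  calc |(inner ℝ (‖u‖ ^ (r - 1) • u - ‖v‖ ^ (r - 1) • v) w : ℝ)|
      ≤ ‖‖u‖ ^ (r - 1) • u - ‖v‖ ^ (r - 1) • v‖ * ‖w‖ := abs_real_inner_le_norm _ _
    _ ≤ r * max ‖u‖ ‖v‖ ^ (r - 1) * ‖u - v‖ * ‖w‖ := by
        gcongr; exact norm_rpow_smul_sub_rpow_smul_le u v hr
    _ ≤ r * (‖u‖ + ‖v‖) ^ (r - 1) * ‖u - v‖ * ‖w‖ := by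
        gcongr
end

section
/- Let ω > 0, T > 0 and h ∈ L²(0,T;ℝ). If u is the unique T-periodic solution of u' + ωu = h, then there exists a constant C depending only on T and a lower bound ω₁ ≤ ω (with ω₁ > 0 fixed) such that sup_{t∈[0,T]} |u(t)|² ≤ (C/ω) ∫₀^T h(s)² ds. -/
/-!
For `u' + ωu = h`, the chain rule for the absolutely continuous `u` gives the energy identity
`(u²)' = 2u(h - ωu)`, and `2ωu(h - ωu) ≤ h² - ω²u²` then yields, for `s ≤ t`,
`ω (u(t)² - u(s)²) + ω² ∫ₛᵗ u² ≤ ∫ₛᵗ h²`. Over a full period the boundary terms cancel, so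
`ω² ∫₀ᵀ u² ≤ ∫₀ᵀ h²`; and since by periodicity any `s` reaches any `t` going forward,
`ω u(t)² ≤ ω u(s)² + ∫₀ᵀ h²`. Averaging over `s` gives the bound with `C = 1/(T ω₁) + 1`.
-/

open MeasureTheory Set Filter

theorem sq_sub_sq_eq_integral_two_mul {f u : ℝ → ℝ} {a b s t : ℝ}
    (hf : IntervalIntegrable f volume a b)
    (hu : ∀ x ∈ uIcc a b, u x = u a + ∫ y in a..x, f y)
    (hs : s ∈ uIcc a b) (ht : t ∈ uIcc a b) :
    u t ^ 2 - u s ^ 2 = ∫ x in s..t, 2 * u x * f x := by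
  set U : ℝ → ℝ := fun x => u a + ∫ y in a..x, f y
  have hsub : uIcc s t ⊆ uIcc a b := uIcc_subset_uIcc hs ht
  have hU : AbsolutelyContinuousOnInterval U s t :=
    ((LipschitzWith.const (u a)).lipschitzOnWith.absolutelyContinuousOnInterval.fun_add
      (hf.absolutelyContinuousOnInterval_intervalIntegral left_mem_uIcc)).mono hsub
  calc u t ^ 2 - u s ^ 2 = U t * U t - U s * U s := by rw [hu t ht, hu s hs]; ring
    _ = ∫ x in s..t, deriv U x * U x + U x * deriv U x :=
      (hU.integral_deriv_mul_eq_sub hU).symm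
    _ = ∫ x in s..t, 2 * u x * f x := by
      refine intervalIntegral.integral_congr_ae ?_
      filter_upwards [hf.ae_hasDerivAt_integral] with x hx hxst
      have hx' : x ∈ uIcc a b := hsub (uIoc_subset_uIcc hxst)
      rw [((hx hx' a left_mem_uIcc).const_add (u a)).deriv,
        show U x = u x from (hu x hx').symm]
      ring

theorem continuousOn_of_eq_add_integral {f u : ℝ → ℝ} {a b : ℝ}
    (hf : IntervalIntegrable f volume a b)
    (hu : ∀ x ∈ uIcc a b, u x = u a + ∫ y in a..x, f y) :
    ContinuousOn u (uIcc a b) :=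
  (continuousOn_const.add
    (intervalIntegral.continuousOn_primitive_interval' hf left_mem_uIcc)).congr hu

section LinearDamping

variable {h u : ℝ → ℝ} {ω T : ℝ}

theorem mul_sq_sub_sq_add_sq_mul_integral_le {a b s t : ℝ}
    (hf : IntervalIntegrable (fun x => h x - ω * u x) volume a b)
    (hh : IntervalIntegrable (fun x => h x ^ 2) volume a b)
    (hu : ∀ x ∈ uIcc a b, u x = u a + ∫ y in a..x, (h y - ω * u y))
    (hs : s ∈ uIcc a b) (ht : t ∈ uIcc a b) (hst : s ≤ t) :
    ω * (u t ^ 2 - u s ^ 2) + ω ^ 2 * ∫ x in s..t, u x ^ 2 ≤ ∫ x in s..t, h x ^ 2 := by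
  have hsub : uIcc s t ⊆ uIcc a b := uIcc_subset_uIcc hs ht
  have hcont : ContinuousOn u (uIcc s t) := (continuousOn_of_eq_add_integral hf hu).mono hsub
  have huf : IntervalIntegrable (fun x => 2 * u x * (h x - ω * u x)) volume s t :=
    (hf.mono_set hsub).continuousOn_mul (continuousOn_const.mul hcont)
  have hu2 : IntervalIntegrable (fun x => u x ^ 2) volume s t :=
    (hcont.pow 2).intervalIntegrable
  rw [sq_sub_sq_eq_integral_two_mul hf hu hs ht, ← intervalIntegral.integral_const_mul,
    ← intervalIntegral.integral_const_mul,
    ← intervalIntegral.integral_add (huf.const_mul ω) (hu2.const_mul _)]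
  refine intervalIntegral.integral_mono_on hst ((huf.const_mul ω).add (hu2.const_mul _))
    (hh.mono_set hsub) fun x _ => ?_
  nlinarith [sq_nonneg (h x - ω * u x)]

theorem mul_sq_sub_sq_le_integral {a b s t : ℝ}
    (hf : IntervalIntegrable (fun x => h x - ω * u x) volume a b)
    (hh : IntervalIntegrable (fun x => h x ^ 2) volume a b)
    (hu : ∀ x ∈ uIcc a b, u x = u a + ∫ y in a..x, (h y - ω * u y))
    (hs : s ∈ uIcc a b) (ht : t ∈ uIcc a b) (hst : s ≤ t) :
    ω * (u t ^ 2 - u s ^ 2) ≤ ∫ x in s..t, h x ^ 2 := by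
  have := mul_sq_sub_sq_add_sq_mul_integral_le hf hh hu hs ht hst
  have : 0 ≤ ω ^ 2 * ∫ x in s..t, u x ^ 2 :=
    mul_nonneg (sq_nonneg ω) (intervalIntegral.integral_nonneg hst fun x _ => sq_nonneg (u x))
  linarith

theorem mul_sq_le_of_eq_add_integral (hT : 0 ≤ T)
    (hh : IntervalIntegrable (fun x => h x ^ 2) volume 0 T)
    (hu : ∀ x ∈ Icc 0 T, u x = u 0 + ∫ y in (0 : ℝ)..x, (h y - ω * u y))
    {t : ℝ} (ht : t ∈ Icc 0 T) :
    ω * u t ^ 2 ≤ ω * u 0 ^ 2 + ∫ x in (0 : ℝ)..T, h x ^ 2 := by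
  have hhT : ∫ x in (0 : ℝ)..t, h x ^ 2 ≤ ∫ x in (0 : ℝ)..T, h x ^ 2 :=
    intervalIntegral.integral_mono_interval le_rfl ht.1 ht.2
      (ae_of_all _ fun x => sq_nonneg (h x)) hh
  by_cases hf : IntervalIntegrable (fun x => h x - ω * u x) volume 0 t
  · have hu' : ∀ x ∈ uIcc 0 t, u x = u 0 + ∫ y in (0 : ℝ)..x, (h y - ω * u y) :=
      fun x hx => hu x (Icc_subset_Icc_right ht.2 (uIcc_of_le ht.1 ▸ hx))
    have := mul_sq_sub_sq_le_integral hf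
      (hh.mono_set (uIcc_subset_uIcc_left (mem_uIcc_of_le ht.1 ht.2)))
      hu' left_mem_uIcc right_mem_uIcc ht.1
    linarith
  · have hut : u t = u 0 := by rw [hu t ht, intervalIntegral.integral_undef hf, add_zero]
    have : 0 ≤ ∫ x in (0 : ℝ)..T, h x ^ 2 :=
      intervalIntegral.integral_nonneg hT fun x _ => sq_nonneg (h x)
    rw [hut]
    linarith

/- The integral in `hu` takes the junk value `0` wherever `h - ωu` fails to be integrable, so
integrability has to be derived: `u` is bounded where the integrand is integrable (by the bound
above) and equal to `u 0` where it is not. -/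
theorem intervalIntegrable_of_eq_add_integral (hT : 0 ≤ T) (hω : 0 < ω)
    (hh : IntegrableOn h (Ioc 0 T)) (hh2 : IntervalIntegrable (fun x => h x ^ 2) volume 0 T)
    (hu : ∀ x ∈ Icc 0 T, u x = u 0 + ∫ y in (0 : ℝ)..x, (h y - ω * u y)) :
    IntervalIntegrable (fun x => h x - ω * u x) volume 0 T := by
  set M := √(u 0 ^ 2 + (∫ x in (0 : ℝ)..T, h x ^ 2) / ω)
  have huM : ∀ x ∈ Icc 0 T, |u x| ≤ M := fun x hx => Real.abs_le_sqrt <| by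
    have := mul_sq_le_of_eq_add_integral hT hh2 hu hx
    rw [← sub_le_iff_le_add', le_div_iff₀ hω]
    linarith
  set f : ℝ → ℝ := fun x => h x - ω * u x
  have hfM : ∀ x ∈ Icc 0 T, |f x| ≤ |h x| + ω * M := fun x hx =>
    calc |f x| ≤ |h x| + |ω * u x| := abs_sub _ _
      _ ≤ |h x| + ω * M := by rw [abs_mul, abs_of_pos hω]; gcongr; exact huM x hx
  have hg : IntegrableOn (fun x => |h x| + ω * M) (Ioc 0 T) :=
    hh.abs.add (integrableOn_const measure_Ioc_lt_top.ne)
  set S := {r ∈ Icc 0 T | IntegrableOn f (Ioc 0 r)}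
  have h0S : 0 ∈ S := ⟨left_mem_Icc.2 hT, by simp⟩
  have hSbdd : BddAbove S := ⟨T, fun r hr => hr.1.2⟩
  have hτ : sSup S ∈ Icc 0 T :=
    ⟨le_csSup hSbdd h0S, csSup_le ⟨0, h0S⟩ fun r hr => hr.1.2⟩
  obtain ⟨r, -, hr_lim, hrS⟩ := exists_seq_tendsto_sSup ⟨0, h0S⟩ hSbdd
  have hfτ : IntegrableOn f (Ioc 0 (sSup S)) := by
    refine integrableOn_Ioc_of_intervalIntegral_norm_bounded_right
      (I := ∫ x in Ioc 0 T, (|h x| + ω * M)) (fun n => (hrS n).2) hr_lim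
      (Eventually.of_forall fun n => ?_)
    calc ∫ x in Ioc 0 (r n), ‖f x‖ ≤ ∫ x in Ioc 0 (r n), (|h x| + ω * M) :=
          setIntegral_mono_on (hrS n).2.norm (hg.mono_set (Ioc_subset_Ioc_right (hrS n).1.2))
            measurableSet_Ioc fun x hx => hfM x ⟨hx.1.le, hx.2.trans (hrS n).1.2⟩
      _ ≤ ∫ x in Ioc 0 T, (|h x| + ω * M) :=
          setIntegral_mono_set hg (ae_of_all _ fun x => by positivity)
            (Ioc_subset_Ioc_right (hrS n).1.2).eventuallyLE
  have hfconst : EqOn (fun x => h x - ω * u 0) f (Ioc (sSup S) T) := fun x hx => by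
    have hx0 : x ∈ Icc 0 T := ⟨hτ.1.trans hx.1.le, hx.2⟩
    have hxS : x ∉ S := fun hxS => (le_csSup hSbdd hxS).not_gt hx.1
    have hfx : ¬ IntervalIntegrable f volume 0 x := fun hfx =>
      hxS ⟨hx0, (intervalIntegrable_iff_integrableOn_Ioc_of_le hx0.1).1 hfx⟩
    simp only [f]
    rw [hu x hx0, intervalIntegral.integral_undef hfx, add_zero]
  rw [intervalIntegrable_iff_integrableOn_Ioc_of_le hT, ← Ioc_union_Ioc_eq_Ioc hτ.1 hτ.2]
  exact hfτ.union (((hh.mono_set (Ioc_subset_Ioc_left hτ.1)).sub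
    (integrableOn_const measure_Ioc_lt_top.ne)).congr_fun hfconst measurableSet_Ioc)

theorem mul_sq_le_mul_sq_add_of_periodic (hT : 0 ≤ T)
    (hf : IntervalIntegrable (fun x => h x - ω * u x) volume 0 T)
    (hh : IntervalIntegrable (fun x => h x ^ 2) volume 0 T)
    (hu : ∀ x ∈ uIcc 0 T, u x = u 0 + ∫ y in (0 : ℝ)..x, (h y - ω * u y))
    (hper : u 0 = u T) {s t : ℝ} (hs : s ∈ Icc 0 T) (ht : t ∈ Icc 0 T) :
    ω * u t ^ 2 ≤ ω * u s ^ 2 + ∫ x in (0 : ℝ)..T, h x ^ 2 := by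
  have energy {a b : ℝ} (ha : a ∈ Icc 0 T) (hb : b ∈ Icc 0 T) (hab : a ≤ b) :
      ω * (u b ^ 2 - u a ^ 2) ≤ ∫ x in a..b, h x ^ 2 :=
    mul_sq_sub_sq_le_integral hf hh hu (mem_uIcc_of_le ha.1 ha.2) (mem_uIcc_of_le hb.1 hb.2) hab
  have hh' {a b : ℝ} (ha : a ∈ Icc 0 T) (hb : b ∈ Icc 0 T) :
      IntervalIntegrable (fun x => h x ^ 2) volume a b :=
    hh.mono_set (uIcc_subset_uIcc (mem_uIcc_of_le ha.1 ha.2) (mem_uIcc_of_le hb.1 hb.2))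
  have h0 : (0 : ℝ) ∈ Icc 0 T := left_mem_Icc.2 hT
  have hT' : T ∈ Icc 0 T := right_mem_Icc.2 hT
  rcases le_total s t with hst | hts
  · have := energy hs ht hst
    have : ∫ x in s..t, h x ^ 2 ≤ ∫ x in (0 : ℝ)..T, h x ^ 2 :=
      intervalIntegral.integral_mono_interval hs.1 hst ht.2 (ae_of_all _ fun x => sq_nonneg _) hh
    linarith
  · have h1 := energy h0 ht ht.1
    have h2 := energy hs hT' hs.2
    have hmid : 0 ≤ ∫ x in t..s, h x ^ 2 :=
      intervalIntegral.integral_nonneg hts fun x _ => sq_nonneg _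
    rw [← intervalIntegral.integral_add_adjacent_intervals (hh' h0 ht) (hh' ht hT'),
      ← intervalIntegral.integral_add_adjacent_intervals (hh' ht hs) (hh' hs hT')]
    rw [← hper] at h2
    linarith

end LinearDamping

/-- Uniform sup-bound `sup |u|² ≤ (C/ω) ∫ h²` for the `T`-periodic solution of `u' + ω u = h`,
with a constant `C` depending only on `T` and a fixed lower bound `ω₁ ≤ ω`. -/
theorem stmt_5 (T ω₁ : ℝ) (hT : 0 < T) (hω₁ : 0 < ω₁) :
    ∃ C > (0 : ℝ), ∀ ω : ℝ, ω₁ ≤ ω → ∀ h u : ℝ → ℝ,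
      MemLp h 2 (volume.restrict (Ioc (0 : ℝ) T)) →
      (∀ t ∈ Icc (0 : ℝ) T, u t = u 0 + ∫ s in (0 : ℝ)..t, (h s - ω * u s)) →
      u 0 = u T →
      ∀ t ∈ Icc (0 : ℝ) T, (u t) ^ 2 ≤ (C / ω) * ∫ s in (0 : ℝ)..T, (h s) ^ 2 := by
  refine ⟨1 / (T * ω₁) + 1, by positivity, fun ω hω h u hh hu hper t ht => ?_⟩
  have hω0 : 0 < ω := hω₁.trans_le hω
  have hh2 : IntervalIntegrable (fun x => h x ^ 2) volume 0 T :=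
    (intervalIntegrable_iff_integrableOn_Ioc_of_le hT.le).2 hh.integrable_sq
  have hf := intervalIntegrable_of_eq_add_integral hT.le hω0 (hh.integrable one_le_two) hh2 hu
  have hu' : ∀ x ∈ uIcc 0 T, u x = u 0 + ∫ y in (0 : ℝ)..x, (h y - ω * u y) := by
    rwa [uIcc_of_le hT.le]
  have hu2 : IntervalIntegrable (fun x => u x ^ 2) volume 0 T :=
    ((continuousOn_of_eq_add_integral hf hu').pow 2).intervalIntegrable
  set K := ∫ x in (0 : ℝ)..T, h x ^ 2
  set L := ∫ x in (0 : ℝ)..T, u x ^ 2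
  have hL : ω ^ 2 * L ≤ K := by
    simpa [hper] using mul_sq_sub_sq_add_sq_mul_integral_le hf hh2 hu' left_mem_uIcc
      right_mem_uIcc hT.le
  have havg : T * (ω * u t ^ 2) ≤ ω * L + T * K := by
    have := intervalIntegral.integral_mono_on hT.le intervalIntegrable_const
      ((hu2.const_mul ω).add intervalIntegrable_const)
      fun s hs => mul_sq_le_mul_sq_add_of_periodic hT.le hf hh2 hu' hper hs ht
    simp only [intervalIntegral.integral_add (hu2.const_mul ω) intervalIntegrable_const,
      intervalIntegral.integral_const_mul, intervalIntegral.integral_const, sub_zero,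
      smul_eq_mul] at this
    linarith
  have hK : 0 ≤ K := intervalIntegral.integral_nonneg hT.le fun x _ => sq_nonneg (h x)
  rw [div_mul_eq_mul_div, le_div_iff₀ hω0]
  calc u t ^ 2 * ω = T * (ω * u t ^ 2) / T := by field_simp
    _ ≤ (ω * L + T * K) / T := by gcongr
    _ ≤ (K / ω + T * K) / T := by
      gcongr
      rw [le_div_iff₀ hω0]
      linarith
    _ = 1 / (T * ω) * K + K := by field_simp
    _ ≤ 1 / (T * ω₁) * K + K := by gcongr
    _ = (1 / (T * ω₁) + 1) * K := by ring
end
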